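/- arXiv:2507.08348 — 7 statements merged into one kernel-verified Lean document; each statement's English description precedes it below -/
import Mathlib

section
/- Let G be a 2-edge-connected undirected graph with DFS tree T. Orient every tree edge from parent to child and every back edge from descendant to ancestor. Then the resulting directed graph is strongly connected. -/
open Relation

private lemma chain_iter {V : Type*} {parent : V → V} {r : V} {a b : V}
    (h : ReflTransGen (fun x y => x ≠ r ∧ parent x = y) a b) :
    ∃ n, parent^[n] a = b := by
  induction h with
  | refl => exact ⟨0, rfl⟩
  | tail _ h ih =>
    obtain ⟨n, hn⟩ := ih
    exact ⟨n + 1, by rw [Function.iterate_succ_apply', hn, h.2]⟩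

private lemma iter_chain {V : Type*} {parent : V → V} {r : V} (hpr : parent r = r) :
    ∀ (k : ℕ) (w v : V), parent^[k] w = v →
    ReflTransGen (fun x y => x ≠ r ∧ parent x = y) w v ∨ v = r := by
  intro k
  induction k with
  | zero => intro w v h; exact Or.inl (h ▸ ReflTransGen.refl)
  | succ k ih =>
    intro w v h
    by_cases hw : w = r
    · right
      rw [hw, Function.iterate_fixed hpr] at h
      exact h.symm
    · rw [Function.iterate_succ_apply] at h
      rcases ih (parent w) v h with h' | h'
      · exact Or.inl (ReflTransGen.head ⟨hw, rfl⟩ h')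
      · exact Or.inr h'

private lemma walk_cross {V : Type*} {G : SimpleGraph V} {S : Set V} :
    ∀ {a b : V}, G.Walk a b → a ∈ S → b ∉ S →
    ∃ u w, G.Adj u w ∧ u ∈ S ∧ w ∉ S := by
  intro a b p
  induction p with
  | nil => intro h h'; exact absurd h h'
  | @cons a c b h p ih =>
    intro ha hb
    by_cases hc : c ∈ S
    · exact ih hc hb
    · exact ⟨a, c, h, ha, hc⟩

/-- In a 2-edge-connected graph `G` with a DFS tree (given by a `parent`
function rooted at `r`, with ancestor relation `anc`), orienting every tree
edge from parent to child and every back edge from descendant to ancestor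
yields a strongly connected directed graph. -/
theorem stmt1 {V : Type*} [Fintype V] (G : SimpleGraph V) (r : V)
    (hconn : G.Connected)
    (h2ec : ∀ e ∈ G.edgeSet, (G.deleteEdges {e}).Connected)
    (parent : V → V) (hpr : parent r = r)
    (hpadj : ∀ v, v ≠ r → G.Adj (parent v) v)
    (anc : V → V → Prop)
    (hanc : ∀ a b, anc a b ↔
      Relation.ReflTransGen (fun x y => x ≠ r ∧ parent x = y) b a)
    (htree : ∀ v, anc r v)
    (hback : ∀ u v, G.Adj u v → ¬(parent v = u ∨ parent u = v) →
      anc u v ∨ anc v u) :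
    ∀ u v : V, Relation.ReflTransGen
      (fun a b => G.Adj a b ∧
        ((b ≠ r ∧ parent b = a) ∨
         (¬(parent a = b ∨ parent b = a) ∧ anc b a))) u v := by
  set D := fun a b => G.Adj a b ∧
      ((b ≠ r ∧ parent b = a) ∨
       (¬(parent a = b ∨ parent b = a) ∧ anc b a)) with hD
  -- anc a r → a = r
  have hancr : ∀ a, anc a r → a = r := by
    intro a h
    rw [hanc] at h
    rcases h.cases_head with h | ⟨c, ⟨hc, _⟩, _⟩
    · exact h.symm
    · exact absurd rfl hc
  -- transitivity of anc
  have htrans : ∀ a b c, anc a b → anc b c → anc a c := by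
    intro a b c h1 h2
    rw [hanc] at h1 h2 ⊢
    exact h2.trans h1
  -- going down the tree
  have hreach_down : ∀ a b, anc a b → ReflTransGen D a b := by
    intro a b hab
    rw [hanc] at hab
    induction hab with
    | refl => exact .refl
    | tail _ h ih =>
      exact ReflTransGen.head ⟨h.2 ▸ hpadj _ h.1, Or.inl ⟨h.1, h.2⟩⟩ ih
  -- the key claim: everything reaches r
  have key : ∀ n, ∀ v, parent^[n] v = r → ReflTransGen D v r := by
    intro n
    induction n using Nat.strong_induction_on with
    | _ n ih =>
    intro v hv
    by_cases hvr : v = r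
    · exact hvr ▸ .refl
    · have hadj := hpadj v hvr
      have hedge : s(parent v, v) ∈ G.edgeSet := hadj
      obtain ⟨p⟩ := (h2ec _ hedge).preconnected v r
      have hvS : anc v v := (hanc v v).mpr .refl
      have hrS : r ∉ {x | anc v x} := fun h => hvr (hancr v h)
      obtain ⟨u, w, hG'uw, huS, hwS⟩ := walk_cross p hvS hrS
      rw [SimpleGraph.deleteEdges_adj, Set.mem_singleton_iff] at hG'uw
      obtain ⟨hGuw, hne⟩ := hG'uw
      -- rule out tree edges
      have hnt1 : parent w ≠ u := by
        intro hpw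
        by_cases hwr : w = r
        · apply hvr
          apply hancr v
          rw [hwr, hpr] at hpw
          exact hpw ▸ huS
        · exact hwS (htrans v u w huS ((hanc u w).mpr (ReflTransGen.single ⟨hwr, hpw⟩)))
      have hnt2 : parent u ≠ w := by
        intro hpu
        by_cases huv : u = v
        · apply hne
          rw [huv, ← hpu, huv, Sym2.eq_swap]
        · have := (hanc v u).mp huS
          rcases this.cases_head with h | ⟨c, hc, hcv⟩
          · exact huv h
          · have hcw : c = w := hc.2 ▸ hpu
            exact hwS ((hanc v w).mpr (hcw ▸ hcv))
      -- it's a back edge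
      rcases hback u w hGuw (by push_neg; exact ⟨hnt1, hnt2⟩) with hub | hwu
      · exact absurd (htrans v u w huS hub) hwS
      · -- anc w u : w is an ancestor of u; v is also an ancestor of u
        obtain ⟨k, hk⟩ := chain_iter ((hanc w u).mp hwu)
        obtain ⟨m, hm⟩ := chain_iter ((hanc v u).mp huS)
        have hDuw : D u w := ⟨hGuw, Or.inr ⟨by push_neg; exact ⟨hnt2, hnt1⟩, hwu⟩⟩
        have hvu : ReflTransGen D v u := hreach_down v u huS
        rcases le_total k m with hkm | hmk
        · -- then anc v w, contradiction
          exfalso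
          have : parent^[m - k] w = v := by
            rw [← hk, ← Function.iterate_add_apply, Nat.sub_add_cancel hkm, hm]
          rcases iter_chain hpr _ _ _ this with h | h
          · exact hwS ((hanc v w).mpr h)
          · exact hvr h
        · -- anc w v
          have hwv : parent^[k - m] v = w := by
            rw [← hm, ← Function.iterate_add_apply, Nat.sub_add_cancel hmk, hk]
          by_cases hwr : w = r
          · exact (hvu.trans (ReflTransGen.single hDuw)).trans (hwr ▸ .refl)
          · have hkmn : k - m < n := by
              by_contra hle
              push_neg at hle
              apply hwr
              rw [← hwv, ← Nat.sub_add_cancel hle, Function.iterate_add_apply, hv,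
                Function.iterate_fixed hpr]
            have hkm0 : k - m ≠ 0 := by
              intro h0
              rw [h0, Function.iterate_zero_apply] at hwv
              exact hwS (hwv ▸ hvS)
            have hwr' : parent^[n - (k - m)] w = r := by
              rw [← hwv, ← Function.iterate_add_apply, Nat.sub_add_cancel hkmn.le, hv]
            have hlt : n - (k - m) < n :=
              Nat.sub_lt (Nat.pos_of_ne_zero (fun h => by simp [h] at hkmn)) (Nat.pos_of_ne_zero hkm0)
            exact (hvu.trans (ReflTransGen.single hDuw)).trans (ih _ hlt w hwr')
  -- conclude
  have keyr : ∀ v, ReflTransGen D v r := by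
    intro v
    obtain ⟨n, hn⟩ := chain_iter ((hanc r v).mp (htree v))
    exact key n v hn
  intro u v
  exact (keyr u).trans (hreach_down r v (htree v))
end

section
/- Every 2-edge-connected undirected graph admits an orientation of its edges that makes it strongly connected (Robbins' theorem). -/
/-!
Grow a vertex set `S` together with an orientation of some edges of `G` inside `S` that makes `S`
strongly connected. While `S ≠ V`, connectivity gives an edge `sx` leaving `S`, and since `sx` is
not a bridge there is a path from `x` back to `s` avoiding it. Following that path up to its first
return `q` to `S` gives an ear `s → x → ⋯ → q`; orienting it this way keeps the enlarged set
strongly connected, because every vertex of `S` reaches `s` and `q` reaches every vertex of `S`.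
The edge `sx` being avoided is what keeps the ear from using `sx` in both directions.
Once `S = V`, the still unoriented edges are oriented arbitrarily.
-/

open Relation

namespace SimpleGraph

variable {V : Type*} {G : SimpleGraph V}

def addArc (R : V → V → Prop) (a b : V) : V → V → Prop :=
  fun u v => R u v ∨ (u = a ∧ v = b)

theorem reflTransGen_addArc {R : V → V → Prop} {a b u v : V}
    (h : ReflTransGen R u v) : ReflTransGen (addArc R a b) u v :=
  ReflTransGen.mono (fun _ _ => Or.inl) _ _ h

theorem reflTransGen_addArc_tail {R : V → V → Prop} {a b u : V}
    (h : ReflTransGen R u a) : ReflTransGen (addArc R a b) u b :=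
  (reflTransGen_addArc h).tail (Or.inr ⟨rfl, rfl⟩)

structure IsPartialOrientation (G : SimpleGraph V) (S : Finset V) (R : V → V → Prop) : Prop where
  adj : ∀ ⦃a b⦄, R a b → G.Adj a b
  mem_left : ∀ ⦃a b⦄, R a b → a ∈ S
  mem_right : ∀ ⦃a b⦄, R a b → b ∈ S
  asymm : ∀ ⦃a b⦄, R a b → ¬ R b a

structure IsStrongOrientationOn (G : SimpleGraph V) (S : Finset V) (R : V → V → Prop) : Prop
    extends IsPartialOrientation G S R where
  reach : ∀ u ∈ S, ∀ v ∈ S, ReflTransGen R u v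

namespace IsPartialOrientation

variable {S : Finset V} {R : V → V → Prop}

theorem mono {T : Finset V} (hR : IsPartialOrientation G S R) (hST : S ⊆ T) :
    IsPartialOrientation G T R where
  adj := hR.adj
  mem_left _ _ h := hST (hR.mem_left h)
  mem_right _ _ h := hST (hR.mem_right h)
  asymm := hR.asymm

theorem addArc {a b : V} (hR : IsPartialOrientation G S R) (ha : a ∈ S) (hb : b ∈ S)
    (hab : G.Adj a b) (hba : ¬ R b a) : IsPartialOrientation G S (addArc R a b) where
  adj := by
    rintro u v (h | ⟨rfl, rfl⟩)
    exacts [hR.adj h, hab]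
  mem_left := by
    rintro u v (h | ⟨rfl, rfl⟩)
    exacts [hR.mem_left h, ha]
  mem_right := by
    rintro u v (h | ⟨rfl, rfl⟩)
    exacts [hR.mem_right h, hb]
  asymm := by
    rintro u v (h | ⟨rfl, rfl⟩) (h' | ⟨hva, rfl⟩)
    · exact hR.asymm h h'
    · exact hba (hva ▸ h)
    · exact hba h'
    · exact hab.ne hva.symm

variable [DecidableEq V]

theorem addArc_insert {w x : V} (hR : IsPartialOrientation G S R) (hw : w ∈ S) (hx : x ∉ S)
    (hwx : G.Adj w x) : IsPartialOrientation G (insert x S) (SimpleGraph.addArc R w x) :=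
  (hR.mono (Finset.subset_insert x S)).addArc (Finset.mem_insert_of_mem hw)
    (Finset.mem_insert_self x S) hwx fun h => hx (hR.mem_left h)

end IsPartialOrientation

section Ear

variable [DecidableEq V] {R : V → V → Prop} {S : Finset V} {w x : V}

theorem forall_mem_insert_reflTransGen_addArc_from {q : V} (hw : w ∈ S)
    (hq : ∀ v ∈ S, ReflTransGen R q v) :
    ∀ v ∈ insert x S, ReflTransGen (addArc R w x) q v := by
  intro v hv
  rcases Finset.mem_insert.mp hv with rfl | hv
  exacts [reflTransGen_addArc_tail (hq w hw), reflTransGen_addArc (hq v hv)]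

theorem forall_mem_insert_reflTransGen_addArc_to (hw : ∀ u ∈ S, ReflTransGen R u w) :
    ∀ u ∈ insert x S, ReflTransGen (addArc R w x) u x := by
  intro u hu
  rcases Finset.mem_insert.mp hu with rfl | hu
  exacts [ReflTransGen.refl, reflTransGen_addArc_tail (hw u hu)]

/-- The ear is `w → x` followed by `p` up to its first vertex in `S`. -/
theorem IsPartialOrientation.exists_isStrongOrientationOn_of_isPath {t : V}
    (hR : IsPartialOrientation G S R) (p : G.Walk x t) (hp : p.IsPath) (ht : t ∈ S)
    (hw : w ∈ S) (hx : x ∉ S) (hwx : G.Adj w x) (hxwp : s(x, w) ∉ p.edges)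
    (hto : ∀ u ∈ S, ReflTransGen R u w)
    (hfrom : ∀ q ∈ p.support, q ∈ S → ∀ v ∈ S, ReflTransGen R q v) :
    ∃ S' R', insert x S ⊆ S' ∧ IsStrongOrientationOn G S' R' := by
  induction p generalizing S R w with
  | nil => exact absurd ht hx
  | @cons x y t hxy p ih =>
    obtain ⟨hp, hxp⟩ := (Walk.cons_isPath_iff hxy p).mp hp
    have hR₁ := hR.addArc_insert hw hx hwx
    have hto₁ := forall_mem_insert_reflTransGen_addArc_to (x := x) hto
    by_cases hy : y ∈ S
    · have hyw : y ≠ w := by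
        rintro rfl
        exact hxwp (by simp)
      have hyx : ¬ SimpleGraph.addArc R w x y x := by
        rintro (h | ⟨rfl, -⟩)
        exacts [hx (hR.mem_right h), hyw rfl]
      refine ⟨insert x S, SimpleGraph.addArc (SimpleGraph.addArc R w x) x y, subset_rfl,
        hR₁.addArc (Finset.mem_insert_self x S) (Finset.mem_insert_of_mem hy) hxy hyx,
        fun u hu v hv => ?_⟩
      have hyv := forall_mem_insert_reflTransGen_addArc_from hw (hfrom y (by simp) hy) v hv
      exact (reflTransGen_addArc_tail (hto₁ u hu)).trans (reflTransGen_addArc hyv)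
    · have hyx : y ∉ insert x S := by simp [hy, hxy.ne.symm]
      obtain ⟨S', R', hS', hR'⟩ := ih hR₁ hp (Finset.mem_insert_of_mem ht)
        (Finset.mem_insert_self x S) hyx hxy
        (fun h => hxp (p.snd_mem_support_of_mem_edges h)) hto₁
        (fun q hq hqS => by
          have hqx : q ≠ x := by rintro rfl; exact hxp hq
          exact forall_mem_insert_reflTransGen_addArc_from hw
            (hfrom q (by simp [hq]) (Finset.mem_of_mem_insert_of_ne hqS hqx)))
      exact ⟨S', R', (Finset.subset_insert y _).trans hS', hR'⟩

end Ear

theorem isStrongOrientationOn_singleton (v : V) :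
    IsStrongOrientationOn G {v} fun _ _ => False := by
  refine ⟨⟨fun _ _ => False.elim, fun _ _ => False.elim, fun _ _ => False.elim,
    fun _ _ => False.elim⟩, ?_⟩
  simp only [Finset.mem_singleton, forall_eq]
  exact ReflTransGen.refl

theorem IsStrongOrientationOn.exists_ssuperset [DecidableEq V] {S : Finset V}
    {R : V → V → Prop} (hR : IsStrongOrientationOn G S R) (hG : G.Preconnected)
    (hbr : ∀ ⦃u v⦄, G.Adj u v → ¬ G.IsBridge s(u, v)) {a b : V} (ha : a ∈ S) (hb : b ∉ S) :
    ∃ S' R', S ⊂ S' ∧ IsStrongOrientationOn G S' R' := by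
  obtain ⟨d, -, hs, hx⟩ := (hG a b).some.exists_boundary_dart (S : Set V) ha hb
  obtain ⟨p, hp⟩ : ∃ p : G.Walk d.snd d.fst, s(d.snd, d.fst) ∉ p.edges := by
    simpa only [isBridge_iff_forall_walk_mem_edges, not_forall] using hbr d.adj.symm
  obtain ⟨S', R', hS', hR'⟩ := hR.exists_isStrongOrientationOn_of_isPath p.bypass
    p.bypass_isPath hs hs hx d.adj (fun h => hp (p.edges_bypass_subset_edges h))
    (fun u hu => hR.reach u hu _ hs) (fun q _ hq => hR.reach q hq)
  exact ⟨S', R', (Finset.ssubset_insert hx).trans_le hS', hR'⟩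

theorem exists_isStrongOrientationOn_univ [Fintype V] (hG : G.Connected)
    (hbr : ∀ ⦃u v⦄, G.Adj u v → ¬ G.IsBridge s(u, v)) :
    ∃ R, IsStrongOrientationOn G Finset.univ R := by
  classical
  obtain ⟨v⟩ := hG.nonempty
  obtain ⟨S, hS, hmax⟩ :=
    (Finset.univ.filter fun S : Finset V => ∃ R, IsStrongOrientationOn G S R).exists_max_image
      Finset.card ⟨{v}, by simpa using ⟨_, isStrongOrientationOn_singleton v⟩⟩
  obtain ⟨R, hR⟩ := (Finset.mem_filter.mp hS).2
  obtain ⟨a, ha⟩ : S.Nonempty := by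
    simpa using (hmax {v} (by simpa using ⟨_, isStrongOrientationOn_singleton v⟩))
  by_cases hSV : S = Finset.univ
  · exact ⟨R, hSV ▸ hR⟩
  obtain ⟨b, hb⟩ : ∃ b, b ∉ S := by simpa [Finset.eq_univ_iff_forall] using hSV
  obtain ⟨S', R', hSS', hR'⟩ := hR.exists_ssuperset hG.preconnected hbr ha hb
  exact absurd (hmax S' (by simpa using ⟨R', hR'⟩)) (Finset.card_lt_card hSS').not_ge

theorem exists_orientation_of_asymm {R : V → V → Prop} (hadj : ∀ ⦃a b⦄, R a b → G.Adj a b)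
    (hasymm : ∀ ⦃a b⦄, R a b → ¬ R b a) :
    ∃ D : V → V → Prop, (∀ a b, R a b → D a b) ∧ (∀ a b, D a b → G.Adj a b) ∧
      ∀ a b, G.Adj a b → (D a b ↔ ¬ D b a) := by
  refine ⟨fun a b => G.Adj a b ∧ (R a b ∨ ¬ R b a ∧ WellOrderingRel a b),
    fun a b h => ⟨hadj h, Or.inl h⟩, fun a b h => h.1, fun a b hab => ⟨?_, fun h => ?_⟩⟩
  · rintro ⟨-, hab | ⟨hba, hlt⟩⟩ ⟨-, hba' | ⟨hab', hgt⟩⟩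
    exacts [hasymm hab hba', hab' hab, hba hba', asymm hlt hgt]
  · by_cases hR : R a b
    · exact ⟨hab, Or.inl hR⟩
    by_cases hR' : R b a
    · exact absurd ⟨hab.symm, Or.inl hR'⟩ h
    rcases trichotomous_of WellOrderingRel a b with hlt | rfl | hgt
    · exact ⟨hab, Or.inr ⟨hR', hlt⟩⟩
    · exact absurd hab (G.loopless.irrefl a)
    · exact absurd ⟨hab.symm, Or.inr ⟨hR, hgt⟩⟩ h

end SimpleGraph

theorem stmt3_general {V : Type*} [Fintype V] (G : SimpleGraph V)
    (hconn : G.Connected)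
    (h2ec : ∀ e ∈ G.edgeSet, (G.deleteEdges {e}).Connected) :
    ∃ D : V → V → Prop,
      (∀ a b, D a b → G.Adj a b) ∧
      (∀ a b, G.Adj a b → (D a b ↔ ¬ D b a)) ∧
      (∀ u v, Relation.ReflTransGen D u v) := by
  obtain ⟨R, hR⟩ := G.exists_isStrongOrientationOn_univ hconn
    fun u v huv hbr => SimpleGraph.isBridge_iff.mp hbr ((h2ec _ huv).preconnected u v)
  obtain ⟨D, hRD, hD, horient⟩ := SimpleGraph.exists_orientation_of_asymm hR.adj hR.asymm
  exact ⟨D, hD, horient, fun u v =>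
    Relation.ReflTransGen.mono hRD _ _ (hR.reach u (Finset.mem_univ u) v (Finset.mem_univ v))⟩

/-- Robbins' theorem: every 2-edge-connected undirected graph admits an
orientation of its edges making it strongly connected. -/
theorem stmt3 {V : Type*} [Fintype V] [Nonempty V] (G : SimpleGraph V)
    (hconn : G.Connected)
    (h2ec : ∀ e ∈ G.edgeSet, (G.deleteEdges {e}).Connected) :
    ∃ D : V → V → Prop,
      (∀ a b, D a b → G.Adj a b) ∧
      (∀ a b, G.Adj a b → (D a b ↔ ¬ D b a)) ∧
      (∀ u v, Relation.ReflTransGen D u v) :=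
  stmt3_general G hconn h2ec
end

section
/- Under the synchronized-counting invariants (each node v has sent Count(v)+1 pulses to each neighbor, Count(v) ≤ number of pulses received from each neighbor, and delivered pulses never exceed sent pulses), for any two nodes u and v joined by a path of length L in the graph, |Count(u) − Count(v)| ≤ L. -/
/-- Under the synchronized-counting invariants, the counters of any two nodes
joined by a path of length `L` differ by at most `L`. -/
theorem stmt5 {V : Type*} [Fintype V] (G : SimpleGraph V)
    (Count : V → ℕ) (sent recv : V → V → ℕ)
    (hsent : ∀ u v, G.Adj u v → sent u v = Count u + 1)
    (hdeliv : ∀ u v, G.Adj u v → recv u v ≤ sent u v)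
    (hminle : ∀ u v, G.Adj u v → Count v ≤ recv u v) :
    ∀ (u v : V) (p : G.Walk u v),
      |(Count u : ℤ) - (Count v : ℤ)| ≤ (p.length : ℤ) := by
  have key : ∀ a b : V, G.Adj a b → Count b ≤ Count a + 1 := fun a b h =>
    (hminle a b h).trans ((hdeliv a b h).trans (hsent a b h).le)
  intro u v p
  induction p with
  | nil => simp
  | @cons a b c h p ih =>
    have h1 := key a b h
    have h2 := key b a h.symm
    rw [abs_sub_le_iff] at ih ⊢
    simp only [SimpleGraph.Walk.length_cons]
    push_cast
    omega
end

section
/- Suppose in a connected n-node graph all node identifiers are integer multiples of N with N ≥ n, all identifiers are distinct, counters satisfy the near-synchronization property (adjacent counters differ by at most 1), and a node v freezes its counter when Count(v) = ID(v). Then the node r with the smallest identifier is the first (and only) node that can reach Count(v) = ID(v): for any v ≠ r, as long as Count(r) ≤ ID(r), we have Count(v) < ID(v). -/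
lemma count_le_walk {V : Type*} (G : SimpleGraph V) (Count : V → ℕ)
    (hsync : ∀ u v, G.Adj u v → Count u ≤ Count v + 1) :
    ∀ {v r : V} (p : G.Walk v r), Count v ≤ Count r + p.length := by
  intro v r p
  induction p with
  | nil => simp
  | cons h p ih =>
      have h2 := hsync _ _ h
      simp only [SimpleGraph.Walk.length_cons]
      omega

/-- In a connected graph with at most `N` nodes, where all identifiers are
distinct positive multiples of `N` and adjacent counters differ by at most 1,
the node `r` of minimum identifier is the first (and only) node that can
reach `Count v = ID v`: as long as `Count r ≤ ID r`, every other node `v`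
satisfies `Count v < ID v`. -/
theorem stmt6 {V : Type*} [Fintype V] (G : SimpleGraph V)
    (hconn : G.Connected)
    (N : ℕ) (hN : Fintype.card V ≤ N)
    (ID Count : V → ℕ)
    (hmul : ∀ v, ∃ k : ℕ, 0 < k ∧ ID v = N * k)
    (hinj : Function.Injective ID)
    (hsync : ∀ u v, G.Adj u v → Count u ≤ Count v + 1)
    (r : V) (hr : ∀ v, ID r ≤ ID v)
    (hCr : Count r ≤ ID r) :
    ∀ v, v ≠ r → Count v < ID v := by
  classical
  intro v hv
  obtain ⟨p⟩ := hconn v r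
  have hpath := p.toPath
  have hlen : (p.toPath : G.Walk v r).length < Fintype.card V :=
    p.toPath.2.length_lt
  have h1 : Count v ≤ Count r + (p.toPath : G.Walk v r).length :=
    count_le_walk G Count hsync _
  -- ID v ≥ ID r + N
  obtain ⟨k, hk, hkr⟩ := hmul r
  obtain ⟨m, hm, hmv⟩ := hmul v
  have hne : ID r ≠ ID v := fun h => hv (hinj h.symm)
  have hNle : ID r + N ≤ ID v := by
    have := hr v
    have hN0 : 0 < N := by
      have : 0 < Fintype.card V := Fintype.card_pos_iff.mpr ⟨v⟩
      omega
    have hkm : k < m := by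
      by_contra h
      push_neg at h
      have : N * m ≤ N * k := Nat.mul_le_mul_left N h
      omega
    have : N * (k + 1) ≤ N * m := Nat.mul_le_mul_left N hkm
    rw [Nat.mul_add, Nat.mul_one] at this
    omega
  omega
end

section
/- In the DFS notification analysis: let P(v,r) denote a shortest directed path from v to r in the strongly-connected orientation of a 2-edge-connected n-node graph with DFS tree rooted at r. If every already-visited node w satisfies Count(w) ≤ ID(r) + length(P(w,r)), and v is an unvisited node whose counter is constrained by |Count(x) − Count(y)| ≤ 1 along every edge not equal to the currently explored edge, then choosing w as the first visited node on P(v,r) gives Count(v) ≤ ID(r) + length(P(v,r)) ≤ ID(r) + n − 1. -/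
/-!
Follow the shortest path `v = p₀ → p₁ → ⋯ → r` to its first visited node `w = pₖ`. Every earlier
edge leaves an unvisited node, so it is not the explored edge (whose tail is visited), and the
counter drops by at most one along it: `cnt v ≤ cnt w + k`. Since the path is shortest,
`dist w = dist v - k`, and the bound at the anchor `w` gives `cnt v ≤ IDr + dist v`.
-/

theorem List.exists_mem_le_add_of_chain {α : Type*} {D : α → α → Prop} {R : Set α} {f : α → ℕ}
    (hstep : ∀ a b, D a b → a ∉ R → f a ≤ f b + 1) :
    ∀ (u : α) (t : List α), (u :: t).IsChain D → (u :: t).getLast (cons_ne_nil u t) ∈ R →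
      ∃ (i : ℕ) (hi : i < (u :: t).length), (u :: t)[i] ∈ R ∧ f u ≤ f (u :: t)[i] + i
  | u, [], _, hlast => ⟨0, by simp, hlast, by simp⟩
  | u, b :: t, hchain, hlast => by
    by_cases hu : u ∈ R
    · exact ⟨0, by simp, hu, by simp⟩
    rw [isChain_cons_cons] at hchain
    obtain ⟨i, hi, hiR, hbound⟩ :=
      exists_mem_le_add_of_chain hstep b t hchain.2 (by rwa [getLast_cons_cons] at hlast)
    refine ⟨i + 1, by simpa using hi, by simpa using hiR, ?_⟩
    have := hstep u b hchain.1 hu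
    simp only [getElem_cons_succ]
    omega

theorem stmt9_general {V : Type*} [Fintype V] (D : V → V → Prop)
    (R : Set V) (r : V) (hr : r ∈ R)
    (dist : V → ℕ) (IDr : ℕ) (cnt : V → ℕ)
    (hvisited : ∀ w ∈ R, cnt w ≤ IDr + dist w)
    (hdistle : ∀ x : V, dist x ≤ Fintype.card V - 1)
    (ex : V × V) (hex : ex.1 ∈ R)
    (hstep : ∀ a b : V, D a b → (a, b) ≠ ex → cnt a ≤ cnt b + 1)
    (v : V)
    (p : List V) (hphead : p.head? = some v) (hplast : p.getLast? = some r)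
    (hchain : p.Chain' D)
    (hlen : p.length = dist v + 1)
    (hshort : ∀ i : Fin p.length, dist (p.get i) = dist v - (i : ℕ)) :
    cnt v ≤ IDr + dist v ∧ cnt v ≤ IDr + (Fintype.card V - 1) := by
  obtain ⟨t, rfl⟩ : ∃ t, p = v :: t := by
    cases p with
    | nil => simp at hphead
    | cons u t => exact ⟨t, by simpa using hphead⟩
  have hlast : (v :: t).getLast (List.cons_ne_nil v t) = r := by
    simpa [List.getLast?_eq_some_getLast] using hplast
  have hstep_unvisited : ∀ a b, D a b → a ∉ R → cnt a ≤ cnt b + 1 :=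
    fun a b hab ha => hstep a b hab fun h => ha (by rw [← h] at hex; exact hex)
  obtain ⟨k, hk, hkR, hcount⟩ :=
    List.exists_mem_le_add_of_chain hstep_unvisited v t hchain (hlast ▸ hr)
  have hanchor := hvisited _ hkR
  have hdist := hshort ⟨k, hk⟩
  simp only [List.get_eq_getElem] at hdist
  have hdistv := hdistle v
  constructor <;> omega

/-- Chain-and-anchor bound for the DFS notification analysis. `D` is the
strongly connected orientation, `dist w` is the directed distance from `w` to
the root `r`, `R` is the set of already-visited nodes (containing `r`), and
`ex` is the currently explored directed edge, whose tail lies in `R`. If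
every visited node `w` satisfies `cnt w ≤ IDr + dist w`, counters change by
at most 1 along every directed edge other than `ex`, and `p` is a shortest
directed path from the unvisited node `v` to `r` (distances decreasing by one
along it), then `cnt v ≤ IDr + dist v ≤ IDr + (n - 1)`. -/
theorem stmt9 {V : Type*} [Fintype V] (D : V → V → Prop)
    (R : Set V) (r : V) (hr : r ∈ R)
    (dist : V → ℕ) (IDr : ℕ) (cnt : V → ℕ)
    (hvisited : ∀ w ∈ R, cnt w ≤ IDr + dist w)
    (hdistle : ∀ x : V, dist x ≤ Fintype.card V - 1)
    (hdistr : dist r = 0)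
    (ex : V × V) (hex : ex.1 ∈ R)
    (hstep : ∀ a b : V, D a b → (a, b) ≠ ex → cnt a ≤ cnt b + 1)
    (v : V) (hv : v ∉ R)
    (p : List V) (hphead : p.head? = some v) (hplast : p.getLast? = some r)
    (hchain : p.Chain' D)
    (hlen : p.length = dist v + 1)
    (hshort : ∀ i : Fin p.length, dist (p.get i) = dist v - (i : ℕ)) :
    cnt v ≤ IDr + dist v ∧ cnt v ≤ IDr + (Fintype.card V - 1) :=
  stmt9_general D R r hr dist IDr cnt hvisited hdistle ex hex hstep v p hphead hplast hchain hlen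
    hshort
end

section
/- On a ring of n ≥ 2 nodes running the competing phase with pairwise distinct even identifiers, the node v₂ with the globally minimum identifier exits the competing loop strictly before either of its neighbors v₁, v₃ can exit theirs; moreover v₁ and v₃ cannot complete iteration ID(v₂)+2 of the loop before receiving pulses sent by v₂ after v₂ exited the loop. -/
/-- On a ring, let `v₂` be the node with globally minimum identifier `ID2`,
with neighbors `v₁`, `v₃` of identifiers `ID1`, `ID3`. Identifiers are
pairwise distinct even numbers and `ID2` is minimal. Time is discrete;
`it₁ t`, `it₂ t`, `it₃ t` are the numbers of completed competing-loop
iterations at time `t`; `s21 t`/`s23 t` count the pulses `v₂` has sent to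
`v₁`/`v₃`, `r21 t`/`r23 t` those received there; `post1 t`/`post3 t` count
the pulses `v₂` sent to `v₁`/`v₃` after exiting its competing loop. The
hypotheses are the loop invariants: completing `i` iterations requires `i`
pulses from each neighbor, pulses received by time `t ≥ 1` were sent by time
`t - 1`, `v₂` sends at most `ID2` pulses in each direction while competing,
and post-exit pulses are sent only after `v₂` has exited (`it₂ = ID2`). Then
`v₂` exits the competing loop strictly before `v₁` or `v₃` do, and neither
`v₁` nor `v₃` can complete iteration `ID2 + 2` before receiving two pulses
sent by `v₂` after its exit. -/
theorem stmt14 (ID1 ID2 ID3 : ℕ)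
    (heven1 : Even ID1) (heven2 : Even ID2) (heven3 : Even ID3)
    (hne12 : ID1 ≠ ID2) (hne23 : ID2 ≠ ID3)
    (hmin1 : ID2 < ID1) (hmin3 : ID2 < ID3)
    (it1 it2 it3 s21 s23 r21 r23 post1 post3 : ℕ → ℕ)
    (hmono2 : Monotone it2)
    (hit1 : ∀ t, it1 t ≤ ID1) (hit2 : ∀ t, it2 t ≤ ID2) (hit3 : ∀ t, it3 t ≤ ID3)
    -- completing `i` iterations requires having consumed `i` pulses from each neighbor
    (hneed1 : ∀ t, it1 t ≤ r21 t) (hneed3 : ∀ t, it3 t ≤ r23 t)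
    -- pulses consumed were delivered, hence sent at a strictly earlier time
    (hrs1 : ∀ t, r21 t ≤ s21 t) (hrs3 : ∀ t, r23 t ≤ s23 t)
    (hr10 : r21 0 = 0) (hr30 : r23 0 = 0)
    (hdelay1 : ∀ t, 1 ≤ t → r21 t ≤ s21 (t - 1))
    (hdelay3 : ∀ t, 1 ≤ t → r23 t ≤ s23 (t - 1))
    -- v₂ sends at most ID2 pulses per direction in the competing phase
    (hsend1 : ∀ t, s21 t ≤ ID2 + post1 t) (hsend3 : ∀ t, s23 t ≤ ID2 + post3 t)
    -- post-exit pulses are only sent after v₂ has completed its ID2 iterations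
    (hpost1 : ∀ t, 1 ≤ post1 t → ID2 ≤ it2 t)
    (hpost3 : ∀ t, 1 ≤ post3 t → ID2 ≤ it2 t) :
    -- v₁, v₃ cannot complete iteration ID2 + 2 before receiving two post-exit pulses
    (∀ t, ID2 + 2 ≤ it1 t → 2 ≤ post1 t ∧ ID2 ≤ it2 t) ∧
    (∀ t, ID2 + 2 ≤ it3 t → 2 ≤ post3 t ∧ ID2 ≤ it2 t) ∧
    -- v₂ exits strictly before v₁ and before v₃
    (∀ t, ID1 ≤ it1 t → ∃ t' < t, ID2 ≤ it2 t') ∧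
    (∀ t, ID3 ≤ it3 t → ∃ t' < t, ID2 ≤ it2 t') := by
  obtain ⟨a, ha⟩ := heven1
  obtain ⟨b, hb⟩ := heven2
  obtain ⟨c, hc⟩ := heven3
  have h21 : ID2 + 2 ≤ ID1 := by omega
  have h23 : ID2 + 2 ≤ ID3 := by omega
  refine ⟨?_, ?_, ?_, ?_⟩
  · intro t ht
    have h1 := hneed1 t
    have h2 := hrs1 t
    have h3 := hsend1 t
    have hp : 2 ≤ post1 t := by omega
    exact ⟨hp, hpost1 t (by omega)⟩
  · intro t ht
    have h1 := hneed3 t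
    have h2 := hrs3 t
    have h3 := hsend3 t
    have hp : 2 ≤ post3 t := by omega
    exact ⟨hp, hpost3 t (by omega)⟩
  · intro t ht
    have h1 := hneed1 t
    rcases Nat.eq_zero_or_pos t with h | h
    · subst h; omega
    · have h2 := hdelay1 t h
      have h3 := hsend1 (t - 1)
      exact ⟨t - 1, by omega, hpost1 (t - 1) (by omega)⟩
  · intro t ht
    have h1 := hneed3 t
    rcases Nat.eq_zero_or_pos t with h | h
    · subst h; omega
    · have h2 := hdelay3 t h
      have h3 := hsend3 (t - 1)
      exact ⟨t - 1, by omega, hpost3 (t - 1) (by omega)⟩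
end

section
/- Single-competitor ring termination: on a ring where exactly one node v is competing and all other nodes act as relays (forwarding pulses and preserving the invariant that their sent count on each port equals their received count on the opposite port), any pulse sent by v on port 0 eventually returns to v on port 1, and after v sends k pulses on port 0 and receives them all back, each relay node has |R₁ − R₀| = k where R₀, R₁ count the pulses it has received on each port. -/
/-- Single-competitor ring termination. Nodes are indexed by `ZMod n`; node
`0` is the unique competitor and all other nodes are relays. `sCW i`/`rCW i`
are the pulses node `i` has sent clockwise (to `i + 1`) / received from
`i - 1`, and similarly counterclockwise. In the quiescent state all sent
pulses are delivered, relays forward every pulse out of the opposite port,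
and the competitor has sent `k` pulses on port 0 (clockwise) and none the
other way. Then all `k` pulses return to the competitor on its other port,
and every relay has received exactly `k` pulses on one port and `0` on the
other, so its received-difference counter has absolute value `k`. -/
theorem stmt17 (n : ℕ) (hn : 2 ≤ n) (k : ℕ)
    (sCW rCW sCCW rCCW : ZMod n → ℕ)
    (hdelivCW : ∀ i : ZMod n, rCW i = sCW (i - 1))
    (hdelivCCW : ∀ i : ZMod n, rCCW i = sCCW (i + 1))
    (hrelayCW : ∀ i : ZMod n, i ≠ 0 → sCW i = rCW i)
    (hrelayCCW : ∀ i : ZMod n, i ≠ 0 → sCCW i = rCCW i)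
    (hv0 : sCW 0 = k) (hv1 : sCCW 0 = 0) :
    rCW 0 = k ∧
    ∀ i : ZMod n, i ≠ 0 →
      rCW i = k ∧ rCCW i = 0 ∧ ((rCW i : ℤ) - (rCCW i : ℤ)).natAbs = k := by
  haveI : NeZero n := ⟨by omega⟩
  have hcw : ∀ m : ℕ, sCW ((m : ZMod n)) = k := by
    intro m
    induction m with
    | zero => simpa using hv0
    | succ m ih =>
      by_cases h : ((m + 1 : ℕ) : ZMod n) = 0
      · rw [h, hv0]
      · rw [hrelayCW _ h, hdelivCW]
        have : ((m + 1 : ℕ) : ZMod n) - 1 = (m : ZMod n) := by push_cast; ring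
        rw [this, ih]
  have hccw : ∀ m : ℕ, sCCW (-(m : ZMod n)) = 0 := by
    intro m
    induction m with
    | zero => simpa using hv1
    | succ m ih =>
      by_cases h : (-((m + 1 : ℕ) : ZMod n)) = 0
      · rw [h, hv1]
      · rw [hrelayCCW _ h, hdelivCCW]
        have : -((m + 1 : ℕ) : ZMod n) + 1 = -(m : ZMod n) := by push_cast; ring
        rw [this, ih]
  have hcwAll : ∀ i : ZMod n, sCW i = k := by
    intro i
    have := hcw i.val
    rwa [ZMod.natCast_val, ZMod.cast_id] at this
  have hccwAll : ∀ i : ZMod n, sCCW i = 0 := by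
    intro i
    have := hccw (-i).val
    rwa [ZMod.natCast_val, ZMod.cast_id, neg_neg] at this
  refine ⟨by rw [hdelivCW, hcwAll], fun i hi => ?_⟩
  refine ⟨by rw [hdelivCW, hcwAll], by rw [hdelivCCW, hccwAll], ?_⟩
  rw [hdelivCW, hcwAll, hdelivCCW, hccwAll]
  simp
end
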